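/- Among all rooted trees with a given outdegree sequence S (the multiset of numbers of children of all vertices), the greedy caterpillar G(S) has the maximum ancestral spectral radius: for every rooted tree T with outdegree sequence S, ρ_C(T) ≤ ρ_C(G(S)). -/

import Mathlib

open Matrix

/-- A rooted tree on a finite vertex type `V`, encoded by its root and the
parent function: the root is its own parent, and iterating the parent function
from any vertex eventually reaches the root.  (These conditions force the graph
whose edges join each non-root vertex to its parent to be a tree.) -/
structure TreeOn (V : Type) [Fintype V] [DecidableEq V] where
  root : V
  parent : V → V
  parent_root : parent root = root
  reaches : ∀ v, ∃ k, parent^[k] v = root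

namespace TreeOn

variable {V : Type} [Fintype V] [DecidableEq V]

/-- `u` is a (weak) ancestor of `v`: some iterate of the parent function sends
`v` to `u`.  (Any ancestor is reached within `Fintype.card V` steps, so the
bound makes the predicate decidable without changing its meaning.) -/
def IsAncestor (T : TreeOn V) (u v : V) : Prop :=
  ∃ k, k ≤ Fintype.card V ∧ T.parent^[k] v = u

instance (T : TreeOn V) (u v : V) : Decidable (T.IsAncestor u v) := by
  have h : T.IsAncestor u v ↔ ∃ k ∈ Finset.range (Fintype.card V + 1), T.parent^[k] v = u := by
    simp [IsAncestor, Nat.lt_succ_iff]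
  rw [h]; infer_instance

/-- The level of a vertex: its distance to the root. -/
def level (T : TreeOn V) (v : V) : ℕ := Nat.find (T.reaches v)

/-- The ancestral level `ℓ(v ∨ w)`: the level of the lowest common ancestor
of `v` and `w`, i.e. the greatest level of a common ancestor. -/
def lcaLevel (T : TreeOn V) (v w : V) : ℕ :=
  (Finset.univ.filter fun u => T.IsAncestor u v ∧ T.IsAncestor u w).sup T.level

/-- A leaf is a vertex with no children. -/
def IsLeaf (T : TreeOn V) (v : V) : Prop := ∀ u, T.parent u = v → u = v

instance (T : TreeOn V) : DecidablePred T.IsLeaf := fun v =>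
  inferInstanceAs (Decidable (∀ u, T.parent u = v → u = v))

/-- The type of leaves of `T`. -/
abbrev Leaf (T : TreeOn V) := {v : V // T.IsLeaf v}

/-- The ancestral matrix `C(T)`, indexed by the leaves of `T`, whose
`(v, w)` entry is the ancestral level `ℓ(v ∨ w)`. -/
noncomputable def ancMatrix (T : TreeOn V) : Matrix T.Leaf T.Leaf ℝ :=
  Matrix.of fun v w => (T.lcaLevel v.1 w.1 : ℝ)

/-- The ancestral spectral radius `ρ_C(T)`: the largest eigenvalue of `C(T)`. -/
noncomputable def rhoC (T : TreeOn V) : ℝ :=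
  sSup {μ : ℝ | ∃ x : T.Leaf → ℝ, x ≠ 0 ∧ T.ancMatrix.mulVec x = μ • x}

/-- The underlying simple graph of the tree: each non-root vertex is joined
to its parent. -/
def graph (T : TreeOn V) : SimpleGraph V :=
  SimpleGraph.fromRel fun u v => T.parent u = v ∧ u ≠ v

/-- The number of children (outdegree) of a vertex. -/
def childCount (T : TreeOn V) (v : V) : ℕ :=
  (Finset.univ.filter fun u => T.parent u = v ∧ u ≠ v).card

end TreeOn

namespace TreeOn

variable {V : Type} [Fintype V] [DecidableEq V]

/-- A rooted caterpillar: removing all leaves yields a path with the root at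
one end; equivalently, the internal (non-leaf) vertices are pairwise
comparable with respect to the ancestor relation. -/
def IsCaterpillar (T : TreeOn V) : Prop :=
  ∀ v w : V, ¬ T.IsLeaf v → ¬ T.IsLeaf w → T.IsAncestor v w ∨ T.IsAncestor w v

/-- A greedy caterpillar: a rooted caterpillar whose outdegrees are assigned
in ascending order along the backbone, starting from the root. -/
def IsGreedyCaterpillar (T : TreeOn V) : Prop :=
  T.IsCaterpillar ∧
    ∀ v w : V, ¬ T.IsLeaf v → ¬ T.IsLeaf w → T.IsAncestor v w →
      T.childCount v ≤ T.childCount w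

/-- The outdegree sequence of a rooted tree: the multiset of the numbers of
children of all vertices. -/
def outdegSeq (T : TreeOn V) : Multiset ℕ :=
  Finset.univ.val.map T.childCount

end TreeOn

/-!
Write `S_u(x)` for the sum of `x` over the leaves below `u`. Counting common ancestors gives
`xᵀ C(T) x + (∑ x)² = ∑_u S_u(x)²`, in which a leaf `l` contributes `x_l²`, so only the internal
vertices matter. For an eigenvector `x` of `C(T)` we may pass to `|x|` and move it onto the leaves
of `G(S)` so that larger entries sit on deeper leaves; in a caterpillar the leaves below an
internal vertex are the deepest ones, so each `S_v` of `G(S)` is a sum of largest entries. The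
subtrees at the internal vertices of `G(S)` contain `1, …, m` internal vertices, which lets us
match the internal vertices of `T` and `G(S)` so that each partner subtree has at least as many
internal vertices, hence (the largest outdegrees being at the bottom of `G(S)`) at least as many
leaves. A termwise comparison and the Rayleigh bound for `C(G(S))` finish the proof.
-/

open Finset

namespace Finset

variable {ι M : Type*} [AddCommMonoid M] [LinearOrder M] [IsOrderedAddMonoid M] {f : ι → M}

theorem sum_le_sum_of_card_eq_of_forall_le [DecidableEq ι] {s t : Finset ι} (hst : #s = #t)
    (ht : ∀ i ∈ t, ∀ j ∉ t, f j ≤ f i) : ∑ i ∈ s, f i ≤ ∑ i ∈ t, f i := by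
  have hcard : #(s \ t) = #(t \ s) := by
    have := card_inter_add_card_sdiff s t
    have := card_inter_add_card_sdiff t s
    rw [inter_comm] at this
    omega
  suffices ∑ i ∈ s \ t, f i ≤ ∑ i ∈ t \ s, f i by
    rw [← sum_inter_add_sum_sdiff s t, ← sum_inter_add_sum_sdiff t s, inter_comm]
    exact add_le_add le_rfl this
  obtain hst | ⟨j, hj, hmax⟩ := (s \ t).eq_empty_or_nonempty.imp id
    fun hne => (s \ t).exists_max_image f hne
  · rw [hst, card_empty, eq_comm, card_eq_zero] at hcard
    rw [hst, hcard]
  calc ∑ i ∈ s \ t, f i ≤ #(s \ t) • f j := sum_le_card_nsmul _ _ _ hmax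
    _ = #(t \ s) • f j := by rw [hcard]
    _ ≤ ∑ i ∈ t \ s, f i := card_nsmul_le_sum _ _ _ fun i hi =>
        ht i (mem_sdiff.mp hi).1 j (mem_sdiff.mp hj).2

theorem sum_le_sum_of_card_le_of_forall_le [DecidableEq ι] {s t : Finset ι} (hst : #s ≤ #t)
    (ht : ∀ i ∈ t, ∀ j ∉ t, f j ≤ f i) (hf : ∀ i, 0 ≤ f i) :
    ∑ i ∈ s, f i ≤ ∑ i ∈ t, f i := by
  obtain ⟨u, hsu, hut, hu⟩ := exists_subsuperset_card_eq subset_union_left hst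
    (card_le_card (subset_union_right (s₁ := s)))
  exact (sum_le_sum_of_subset_of_nonneg hsu fun i _ _ => hf i).trans
    (sum_le_sum_of_card_eq_of_forall_le hu ht)

end Finset

theorem Fintype.exists_equiv_fin_monotone {α β : Type*} [Fintype α] [LinearOrder β] (f : α → β) :
    ∃ e : Fin (Fintype.card α) ≃ α, Monotone (f ∘ e) := by
  let e₀ := (Fintype.equivFin α).symm
  exact ⟨(Tuple.sort (f ∘ e₀)).trans e₀, Tuple.monotone_sort (f ∘ e₀)⟩

theorem Fintype.exists_equiv_lt_imp_le {α β γ δ : Type*} [Fintype α] [Fintype β]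
    [LinearOrder γ] [LinearOrder δ] (h : Fintype.card α = Fintype.card β) (f : α → γ)
    (g : β → δ) : ∃ e : α ≃ β, ∀ a a', f a < f a' → g (e a) ≤ g (e a') := by
  obtain ⟨eα, hα⟩ := exists_equiv_fin_monotone f
  obtain ⟨eβ, hβ⟩ := exists_equiv_fin_monotone g
  refine ⟨eα.symm.trans ((finCongr h).trans eβ), fun a a' hlt => hβ ?_⟩
  simp only [finCongr_apply, Fin.cast_le_cast]
  by_contra! hgt
  have := hα hgt.le
  simp only [Function.comp_apply, Equiv.apply_symm_apply] at this
  exact this.not_gt hlt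

theorem Fintype.exists_equiv_le_of_card_lt_le {α β γ : Type*} [Fintype α] [Fintype β]
    [LinearOrder γ] (h : Fintype.card α = Fintype.card β) (f : α → γ) (g : β → γ)
    (hfg : ∀ a, #{b | g b < f a} ≤ #{a' | f a' < f a}) : ∃ e : α ≃ β, ∀ a, f a ≤ g (e a) := by
  classical
  obtain ⟨e, he⟩ := exists_equiv_lt_imp_le h f g
  refine ⟨e, fun a => ?_⟩
  by_contra! hlt
  have hmaps : (insert a ({a' | f a' < f a} : Finset α)).map e.toEmbedding ⊆
      ({b | g b < f a} : Finset β) := by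
    intro b hb
    simp only [mem_map_equiv, mem_insert, mem_filter, mem_univ, true_and] at hb ⊢
    rcases hb with hb | hb
    · simpa [← hb] using hlt
    · simpa using (he _ _ hb).trans_lt hlt
  have := card_le_card hmaps
  rw [card_map, card_insert_of_notMem (by simp)] at this
  linarith [hfg a]

namespace Matrix

variable {n : Type*} [Fintype n]

theorem dotProduct_mulVec_le_abs {A : Matrix n n ℝ}
    (hA : ∀ i j, 0 ≤ A i j) (x : n → ℝ) : x ⬝ᵥ A *ᵥ x ≤ |x| ⬝ᵥ A *ᵥ |x| := by
  simp only [dotProduct, mulVec, mul_sum]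
  refine sum_le_sum fun i _ => sum_le_sum fun j _ => ?_
  calc x i * (A i j * x j) ≤ |x i * (A i j * x j)| := le_abs_self _
    _ = |x| i * (A i j * |x| j) := by simp [abs_mul, abs_of_nonneg (hA i j)]

variable [DecidableEq n]

theorem bddAbove_setOf_mulVec_eq_smul (A : Matrix n n ℝ) :
    BddAbove {μ : ℝ | ∃ x : n → ℝ, x ≠ 0 ∧ A *ᵥ x = μ • x} := by
  refine (A.finite_real_spectrum.subset ?_).bddAbove
  rintro μ ⟨x, hx, hAx⟩
  rw [← spectrum_toLin']
  exact (Module.End.hasEigenvalue_of_hasEigenvector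
    ⟨Module.End.mem_eigenspace_iff.mpr (by simpa using hAx), hx⟩).mem_spectrum

theorem IsHermitian.dotProduct_mulVec_le_sSup_mul {A : Matrix n n ℝ} (hA : A.IsHermitian)
    (y : n → ℝ) :
    y ⬝ᵥ A *ᵥ y ≤ sSup {μ : ℝ | ∃ x : n → ℝ, x ≠ 0 ∧ A *ᵥ x = μ • x} * (y ⬝ᵥ y) := by
  set c := sSup {μ : ℝ | ∃ x : n → ℝ, x ≠ 0 ∧ A *ᵥ x = μ • x}
  have hB : (c • 1 - A).IsHermitian := IsHermitian.sub (by simp [IsHermitian]) hA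
  -- an eigenvector of `c • 1 - A` for `ν` is one of `A` for `c - ν`, and `c - ν ≤ c`
  have hPSD : (c • 1 - A).PosSemidef := by
    refine hB.posSemidef_iff_eigenvalues_nonneg.mpr fun i => ?_
    have hv := hB.mulVec_eigenvectorBasis i
    have hmem : c - hB.eigenvalues i ∈ {μ : ℝ | ∃ x : n → ℝ, x ≠ 0 ∧ A *ᵥ x = μ • x} := by
      refine ⟨_, (WithLp.ofLp_eq_zero 2).ne.2 (hB.eigenvectorBasis.orthonormal.ne_zero i), ?_⟩
      rw [sub_mulVec, smul_mulVec, one_mulVec, sub_eq_iff_eq_add] at hv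
      rw [sub_smul, hv]
      abel
    exact (sub_le_self_iff _).mp (le_csSup (bddAbove_setOf_mulVec_eq_smul A) hmem)
  have := hPSD.dotProduct_mulVec_nonneg y
  simp only [star_trivial, sub_mulVec, smul_mulVec, one_mulVec, dotProduct_sub,
    dotProduct_smul, smul_eq_mul] at this
  linarith

end Matrix

namespace TreeOn

variable {V W : Type} [Fintype V] [DecidableEq V] [Fintype W] [DecidableEq W]

section

variable (T : TreeOn V)

theorem iterate_root (k : ℕ) : T.parent^[k] T.root = T.root :=
  Function.iterate_fixed T.parent_root k

theorem iterate_eq_root_iff {v : V} {k : ℕ} : T.parent^[k] v = T.root ↔ T.level v ≤ k := by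
  refine ⟨Nat.find_min' (T.reaches v), fun h => ?_⟩
  rw [← Nat.sub_add_cancel h, Function.iterate_add_apply]
  exact (congrArg _ (Nat.find_spec (T.reaches v))).trans (T.iterate_root _)

theorem level_le_iff {v : V} {k : ℕ} : T.level v ≤ k ↔ T.parent^[k] v = T.root :=
  T.iterate_eq_root_iff.symm

theorem level_iterate (v : V) (k : ℕ) : T.level (T.parent^[k] v) = T.level v - k :=
  eq_of_forall_ge_iff fun j => by
    rw [level_le_iff, ← Function.iterate_add_apply, iterate_eq_root_iff, Nat.sub_le_iff_le_add]

theorem level_eq_zero_iff {v : V} : T.level v = 0 ↔ v = T.root := by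
  rw [← Nat.le_zero, level_le_iff, Function.iterate_zero_apply]

theorem card_image_iterate (v : V) :
    #((range (T.level v + 1)).image (T.parent^[·] v)) = T.level v + 1 := by
  refine (card_image_of_injOn fun i hi j hj hij => ?_).trans (card_range _)
  have := congrArg T.level hij
  simp only [level_iterate, coe_range, Set.mem_Iio] at this hi hj
  omega

theorem level_lt_card (v : V) : T.level v < Fintype.card V := by
  have := card_le_univ ((range (T.level v + 1)).image (T.parent^[·] v))
  rw [card_image_iterate] at this
  omega

theorem iterate_min_level (v : V) (k : ℕ) :
    T.parent^[min k (T.level v)] v = T.parent^[k] v := by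
  rcases le_total k (T.level v) with h | h
  · rw [min_eq_left h]
  · rw [min_eq_right h, T.iterate_eq_root_iff.mpr le_rfl, T.iterate_eq_root_iff.mpr h]

theorem isAncestor_iff {u v : V} : T.IsAncestor u v ↔ ∃ k, T.parent^[k] v = u :=
  ⟨fun ⟨k, _, hk⟩ => ⟨k, hk⟩, fun ⟨k, hk⟩ => ⟨min k (T.level v),
    (min_le_right _ _).trans (T.level_lt_card v).le, (T.iterate_min_level v k).trans hk⟩⟩

theorem isAncestor_refl (v : V) : T.IsAncestor v v := T.isAncestor_iff.mpr ⟨0, rfl⟩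

theorem isAncestor_parent (v : V) : T.IsAncestor (T.parent v) v := T.isAncestor_iff.mpr ⟨1, rfl⟩

theorem isAncestor_root (v : V) : T.IsAncestor T.root v :=
  T.isAncestor_iff.mpr ⟨_, T.iterate_eq_root_iff.mpr le_rfl⟩

theorem IsAncestor.trans {T : TreeOn V} {u v w : V} (huv : T.IsAncestor u v)
    (hvw : T.IsAncestor v w) : T.IsAncestor u w := by
  obtain ⟨a, rfl⟩ := T.isAncestor_iff.mp huv
  obtain ⟨b, rfl⟩ := T.isAncestor_iff.mp hvw
  exact T.isAncestor_iff.mpr ⟨a + b, Function.iterate_add_apply _ _ _ _⟩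

theorem IsAncestor.level_le {T : TreeOn V} {u v : V} (h : T.IsAncestor u v) :
    T.level u ≤ T.level v := by
  obtain ⟨k, rfl⟩ := T.isAncestor_iff.mp h
  rw [level_iterate]
  exact Nat.sub_le _ _

theorem IsAncestor.eq_of_level_eq {T : TreeOn V} {u v : V} (h : T.IsAncestor u v)
    (hl : T.level u = T.level v) : u = v := by
  obtain ⟨k, rfl⟩ := T.isAncestor_iff.mp h
  rw [level_iterate] at hl
  rcases (by omega : k = 0 ∨ T.level v = 0) with rfl | hv
  · rfl
  · rw [T.level_eq_zero_iff.mp hv, iterate_root]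

theorem IsAncestor.level_lt {T : TreeOn V} {u v : V} (h : T.IsAncestor u v) (hne : u ≠ v) :
    T.level u < T.level v :=
  h.level_le.lt_of_ne fun hl => hne (h.eq_of_level_eq hl)

theorem IsAncestor.antisymm {T : TreeOn V} {u v : V} (huv : T.IsAncestor u v)
    (hvu : T.IsAncestor v u) : u = v :=
  huv.eq_of_level_eq (huv.level_le.antisymm hvu.level_le)

theorem IsAncestor.total {T : TreeOn V} {u v w : V} (hu : T.IsAncestor u w)
    (hv : T.IsAncestor v w) : T.IsAncestor u v ∨ T.IsAncestor v u := by
  obtain ⟨a, rfl⟩ := T.isAncestor_iff.mp hu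
  obtain ⟨b, rfl⟩ := T.isAncestor_iff.mp hv
  rcases le_total a b with h | h
  · exact .inr (T.isAncestor_iff.mpr ⟨b - a, by rw [← Function.iterate_add_apply,
      Nat.sub_add_cancel h]⟩)
  · exact .inl (T.isAncestor_iff.mpr ⟨a - b, by rw [← Function.iterate_add_apply,
      Nat.sub_add_cancel h]⟩)

theorem IsAncestor.of_level_le {T : TreeOn V} {u v w : V} (hu : T.IsAncestor u w)
    (hv : T.IsAncestor v w) (hl : T.level u ≤ T.level v) : T.IsAncestor u v := by
  rcases hu.total hv with h | h
  · exact h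
  · rw [h.eq_of_level_eq (h.level_le.antisymm hl)]
    exact T.isAncestor_refl u

theorem isAncestor_parent_of_ne {u v : V} (h : T.IsAncestor u v) (hne : u ≠ v) :
    T.IsAncestor u (T.parent v) := by
  obtain ⟨_ | k, rfl⟩ := T.isAncestor_iff.mp h
  · exact absurd rfl hne
  · exact T.isAncestor_iff.mpr ⟨k, Function.iterate_succ_apply _ _ _⟩

theorem card_filter_isAncestor (v : V) : #{u | T.IsAncestor u v} = T.level v + 1 := by
  rw [← T.card_image_iterate v]
  congr 1
  ext u
  simp only [mem_filter, mem_univ, true_and, mem_image, mem_range, isAncestor_iff]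
  exact ⟨fun ⟨k, hk⟩ => ⟨min k (T.level v), by omega, (T.iterate_min_level v k).trans hk⟩,
    fun ⟨k, _, hk⟩ => ⟨k, hk⟩⟩

theorem lcaLevel_add_one (v w : V) :
    T.lcaLevel v w + 1 = #{u | T.IsAncestor u v ∧ T.IsAncestor u w} := by
  obtain ⟨z, hz, hmax⟩ := exists_max_image {u | T.IsAncestor u v ∧ T.IsAncestor u w} T.level
    ⟨T.root, by simp [isAncestor_root]⟩
  simp only [mem_filter, mem_univ, true_and] at hz hmax
  have hcommon :
      ({u | T.IsAncestor u v ∧ T.IsAncestor u w} : Finset V) =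
        ({u | T.IsAncestor u z} : Finset V) := by
    ext u
    simp only [mem_filter, mem_univ, true_and]
    exact ⟨fun hu => hu.1.of_level_le hz.1 (hmax u hu), fun hu => ⟨hu.trans hz.1, hu.trans hz.2⟩⟩
  have hlca : T.lcaLevel v w = T.level z :=
    (Finset.sup_le fun u hu => hmax u (by simpa using hu)).antisymm
      (Finset.le_sup (by simpa using hz))
  rw [hcommon, hlca, card_filter_isAncestor]

theorem parent_eq_self_iff {v : V} : T.parent v = v ↔ v = T.root := by
  refine ⟨fun h => T.level_eq_zero_iff.mp ?_, fun h => h ▸ T.parent_root⟩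
  have := T.level_iterate v 1
  rw [Function.iterate_one, h] at this
  omega

theorem IsLeaf.eq_of_isAncestor {T : TreeOn V} {u v : V} (hu : T.IsLeaf u)
    (h : T.IsAncestor u v) : u = v := by
  obtain ⟨k, hk⟩ := T.isAncestor_iff.mp h
  induction k with
  | zero => exact hk.symm
  | succ k ih => exact ih (hu _ ((Function.iterate_succ_apply' _ _ _).symm.trans hk))

theorem not_isLeaf_parent {v : V} (hv : v ≠ T.root) : ¬ T.IsLeaf (T.parent v) :=
  fun h => hv (T.parent_eq_self_iff.mp (h v rfl).symm)

theorem childCount_eq_zero_iff {v : V} : T.childCount v = 0 ↔ T.IsLeaf v := by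
  simp only [childCount, card_eq_zero, filter_eq_empty_iff, mem_univ, true_implies, not_and,
    not_not, IsLeaf]

theorem exists_isLeaf : ∃ l, T.IsLeaf l := by
  obtain ⟨l, -, hl⟩ := exists_max_image univ T.level ⟨T.root, mem_univ _⟩
  refine ⟨l, fun c hc => by_contra fun hne => ?_⟩
  have := (T.isAncestor_parent c).level_lt (hc ▸ Ne.symm hne)
  rw [hc] at this
  exact (hl c (mem_univ c)).not_gt this

abbrev Internal := {v : V // ¬ T.IsLeaf v}

def leafCount (u : V) : ℕ := #{l : T.Leaf | T.IsAncestor u l.1}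

def internalCount (u : V) : ℕ := #{a : T.Internal | T.IsAncestor u a.1}

noncomputable def leafSum (x : T.Leaf → ℝ) (u : V) : ℝ := ∑ l : T.Leaf with T.IsAncestor u l.1, x l

theorem card_filter_isAncestor_eq_sum_childCount (u : V) :
    #{w | T.IsAncestor u w} = ∑ w with T.IsAncestor u w, T.childCount w + 1 := by
  set D : Finset V := {w | T.IsAncestor u w}
  have hu : u ∈ D := by simpa [D] using T.isAncestor_refl u
  -- every vertex of the subtree other than `u` is counted once, as a child of its parent
  have hfiber := card_eq_sum_card_fiberwise (f := T.parent) (s := D.erase u) (t := D)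
    fun c hc => by
      obtain ⟨hcu, huc⟩ := mem_erase.mp (mem_coe.mp hc)
      simpa [D] using T.isAncestor_parent_of_ne (by simpa [D] using huc) (Ne.symm hcu)
  rw [card_erase_of_mem hu] at hfiber
  rw [← Nat.sub_add_cancel (card_pos.mpr ⟨u, hu⟩), hfiber]
  refine congrArg (· + 1) (sum_congr rfl fun w hw => congrArg card (ext fun c => ?_))
  simp only [D, mem_erase, mem_filter, mem_univ, true_and] at hw ⊢
  constructor
  · rintro ⟨⟨hcu, huc⟩, rfl⟩
    refine ⟨rfl, fun hc => hcu ?_⟩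
    rw [T.parent_eq_self_iff.mp hc.symm] at huc ⊢
    exact huc.antisymm (T.isAncestor_root u) |>.symm
  · rintro ⟨rfl, hc⟩
    refine ⟨⟨fun hcu => hc ?_, hw.trans (T.isAncestor_parent c)⟩, rfl⟩
    subst hcu
    exact hw.antisymm (T.isAncestor_parent c)

theorem sum_filter_isAncestor_eq {M : Type*} [AddCommMonoid M] (u : V) (g : V → M) :
    ∑ w with T.IsAncestor u w, g w =
      ∑ l : T.Leaf with T.IsAncestor u l.1, g l +
        ∑ a : T.Internal with T.IsAncestor u a.1, g a := by
  simp only [sum_filter]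
  exact (Fintype.sum_subtype_add_sum_subtype _ _).symm

theorem leafCount_eq (u : V) :
    T.leafCount u = 1 + ∑ a : T.Internal with T.IsAncestor u a.1, (T.childCount a - 1) := by
  have hcard := T.card_filter_isAncestor_eq_sum_childCount u
  rw [card_eq_sum_ones, T.sum_filter_isAncestor_eq, T.sum_filter_isAncestor_eq,
    sum_eq_zero fun l _ => T.childCount_eq_zero_iff.mpr l.2] at hcard
  have hint : ∑ a : T.Internal with T.IsAncestor u a.1, T.childCount a =
      ∑ a : T.Internal with T.IsAncestor u a.1, (T.childCount a - 1) + T.internalCount u := by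
    rw [internalCount, card_eq_sum_ones, ← sum_add_distrib]
    exact sum_congr rfl fun a _ => (Nat.sub_add_cancel
      (Nat.one_le_iff_ne_zero.mpr (mt T.childCount_eq_zero_iff.mp a.2))).symm
  rw [hint, ← card_eq_sum_ones, ← card_eq_sum_ones] at hcard
  change T.leafCount u + T.internalCount u = _ at hcard
  omega

theorem leafSum_of_isLeaf (x : T.Leaf → ℝ) (l : T.Leaf) : T.leafSum x l = x l :=
  sum_eq_single_of_mem l (by simp [isAncestor_refl]) fun l' hl' hne =>
    absurd (Subtype.ext (l.2.eq_of_isAncestor (by simpa using hl')).symm) hne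

theorem leafSum_nonneg {x : T.Leaf → ℝ} (hx : 0 ≤ x) (u : V) : 0 ≤ T.leafSum x u :=
  sum_nonneg fun l _ => hx l

theorem sum_sq_leafSum (x : T.Leaf → ℝ) :
    ∑ u, T.leafSum x u ^ 2 = ∑ l, x l ^ 2 + ∑ a : T.Internal, T.leafSum x a ^ 2 := by
  rw [← Fintype.sum_subtype_add_sum_subtype T.IsLeaf]
  simp only [leafSum_of_isLeaf]

theorem dotProduct_ancMatrix_mulVec_add_sq (x : T.Leaf → ℝ) :
    x ⬝ᵥ T.ancMatrix *ᵥ x + (∑ l, x l) ^ 2 = ∑ u, T.leafSum x u ^ 2 := by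
  have hentry : ∀ v w : T.Leaf, T.ancMatrix v w + 1 =
      ∑ u : V, if T.IsAncestor u v ∧ T.IsAncestor u w then (1 : ℝ) else 0 := fun v w => by
    rw [sum_boole, ← lcaLevel_add_one]
    simp [ancMatrix]
  have hsq : ∀ u, T.leafSum x u ^ 2 = ∑ v, ∑ w,
      x v * x w * if T.IsAncestor u v ∧ T.IsAncestor u w then (1 : ℝ) else 0 := fun u => by
    rw [leafSum, sq, sum_filter, sum_mul_sum]
    refine sum_congr rfl fun v _ => sum_congr rfl fun w _ => ?_
    split_ifs <;> simp_all
  calc x ⬝ᵥ T.ancMatrix *ᵥ x + (∑ l, x l) ^ 2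
      = ∑ v, ∑ w, x v * x w * (T.ancMatrix v w + 1) := by
        rw [sq, sum_mul_sum, dotProduct, ← sum_add_distrib]
        refine sum_congr rfl fun v _ => ?_
        rw [mulVec, dotProduct, mul_sum, ← sum_add_distrib]
        exact sum_congr rfl fun w _ => by ring
    _ = ∑ u, T.leafSum x u ^ 2 := by
        simp_rw [hsq, hentry, mul_sum]
        exact (sum_congr rfl fun v _ => sum_comm).trans sum_comm

theorem ancMatrix_nonneg (v w : T.Leaf) : 0 ≤ T.ancMatrix v w := Nat.cast_nonneg _

theorem ancMatrix_isHermitian : T.ancMatrix.IsHermitian :=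
  IsHermitian.ext fun v w => by simp [ancMatrix, lcaLevel, and_comm]

theorem rhoC_nonneg : 0 ≤ T.rhoC := by
  obtain ⟨l, hl⟩ := T.exists_isLeaf
  have hray := T.ancMatrix_isHermitian.dotProduct_mulVec_le_sSup_mul fun _ => 1
  have hq : 0 ≤ (fun _ => (1 : ℝ)) ⬝ᵥ T.ancMatrix *ᵥ fun _ => 1 :=
    sum_nonneg fun v _ => mul_nonneg zero_le_one (sum_nonneg fun w _ =>
      mul_nonneg (T.ancMatrix_nonneg v w) zero_le_one)
  have hpos : 0 < (fun _ : T.Leaf => (1 : ℝ)) ⬝ᵥ fun _ => 1 := by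
    have : Nonempty T.Leaf := ⟨⟨l, hl⟩⟩
    simp [dotProduct, Fintype.card_pos]
  exact nonneg_of_mul_nonneg_left (hq.trans hray) hpos

theorem one_le_internalCount (a : T.Internal) : 1 ≤ T.internalCount a :=
  card_pos.mpr ⟨a, by simp [isAncestor_refl]⟩

theorem internalCount_lt {a b : T.Internal} (h : T.IsAncestor a b) (hne : a ≠ b) :
    T.internalCount b < T.internalCount a := by
  refine card_lt_card ((ssubset_iff_of_subset fun c hc => ?_).mpr ⟨a, ?_, ?_⟩)
  · simp only [mem_filter, mem_univ, true_and] at hc ⊢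
    exact h.trans hc
  · simp [isAncestor_refl]
  · simpa using fun hba => hne (Subtype.ext (h.antisymm hba))

theorem card_internalCount_le_add_le (u : T.Internal) :
    #{a : T.Internal | T.internalCount u ≤ T.internalCount a} + T.internalCount u ≤
      Fintype.card T.Internal + 1 := by
  set A : Finset T.Internal := {a | T.internalCount u ≤ T.internalCount a}
  -- the internal vertices strictly below a deepest `w ∈ A` are not in `A`
  obtain ⟨w, hwA, hmax⟩ := A.exists_max_image (T.level ·.1) ⟨u, by simp [A]⟩
  set B : Finset T.Internal := ({a | T.IsAncestor w a.1} : Finset T.Internal).erase w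
  have hB : #B + 1 = T.internalCount w := card_erase_add_one (by simp [isAncestor_refl])
  have hdisj : Disjoint A B := disjoint_left.mpr fun a haA haB => by
    obtain ⟨hne, hwa⟩ : a ≠ w ∧ T.IsAncestor w a := by simpa [B] using haB
    exact (hmax a haA).not_gt (hwa.level_lt fun h => hne (Subtype.ext h.symm))
  have hAB := card_union_of_disjoint hdisj ▸ card_le_univ (A ∪ B)
  have hw : T.internalCount u ≤ T.internalCount w := by simpa [A] using hwA
  omega

end

variable {T : TreeOn V} {G : TreeOn W}

theorem IsCaterpillar.isAncestor_of_level_lt (hT : T.IsCaterpillar) {v w : V}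
    (hv : ¬ T.IsLeaf v) (hlt : T.level v < T.level w) : T.IsAncestor v w := by
  have hw : w ≠ T.root := fun h => by simp [h, T.level_eq_zero_iff.mpr rfl] at hlt
  have hpw := T.level_iterate w 1
  rw [Function.iterate_one] at hpw
  rcases hT v _ hv (T.not_isLeaf_parent hw) with h | h
  · exact h.trans (T.isAncestor_parent w)
  · obtain rfl | hne := eq_or_ne (T.parent w) v
    · exact T.isAncestor_parent w
    · have := h.level_lt hne
      omega

theorem IsCaterpillar.internalCount_injective (hT : T.IsCaterpillar) :
    Function.Injective fun a : T.Internal => T.internalCount a := by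
  intro a b hab
  by_contra hne
  rcases hT a b a.2 b.2 with h | h
  · exact (T.internalCount_lt h hne).ne' hab
  · exact (T.internalCount_lt h (Ne.symm hne)).ne hab

theorem IsCaterpillar.card_internalCount_lt_le (hT : T.IsCaterpillar) (s : ℕ) :
    #{a : T.Internal | T.internalCount a < s} ≤ s - 1 := by
  rw [← Nat.card_Ico 1 s]
  refine card_le_card_of_injOn (fun a => T.internalCount a) (fun a ha => ?_)
    hT.internalCount_injective.injOn
  simpa using ⟨T.one_le_internalCount a, (mem_filter.mp ha).2⟩

theorem IsCaterpillar.exists_equiv_internalCount_le (hG : G.IsCaterpillar)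
    (h : Fintype.card T.Internal = Fintype.card G.Internal) :
    ∃ φ : T.Internal ≃ G.Internal, ∀ a, T.internalCount a.1 ≤ G.internalCount (φ a).1 := by
  refine Fintype.exists_equiv_le_of_card_lt_le h (fun a => T.internalCount a.1)
    (fun b => G.internalCount b.1) fun a => ?_
  have hT := T.card_internalCount_le_add_le a
  have hsplit := card_filter_add_card_filter_not (s := univ)
    fun a' : T.Internal => T.internalCount a ≤ T.internalCount a'
  simp only [not_le, card_univ] at hsplit
  have hG' := hG.card_internalCount_lt_le (T.internalCount a)
  omega

theorem exists_equiv_childCount (hS : T.outdegSeq = G.outdegSeq) :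
    ∃ e : V ≃ W, ∀ v, G.childCount (e v) = T.childCount v := by
  have hfiber : ∀ c, Fintype.card {v // T.childCount v = c} =
      Fintype.card {w // G.childCount w = c} := fun c => by
    have := congrArg (Multiset.count c) hS
    simpa only [outdegSeq, Multiset.count_map, Fintype.card_subtype, eq_comm, card_def,
      filter_val] using this
  exact ⟨Equiv.ofFiberEquiv fun c => Fintype.equivOfCardEq (hfiber c), Equiv.ofFiberEquiv_map _⟩

theorem isLeaf_iff_of_childCount_eq {v : V} {w : W} (h : G.childCount w = T.childCount v) :
    G.IsLeaf w ↔ T.IsLeaf v := by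
  rw [← childCount_eq_zero_iff, ← childCount_eq_zero_iff, h]

theorem IsGreedyCaterpillar.add_sum_le_leafCount (hG : G.IsGreedyCaterpillar) {v : W}
    {s : Finset G.Internal} (hs : #s ≤ G.internalCount v) :
    1 + ∑ a ∈ s, (G.childCount a - 1) ≤ G.leafCount v := by
  rw [leafCount_eq]
  refine Nat.add_le_add_left (sum_le_sum_of_card_le_of_forall_le hs (fun a ha b hb => ?_)
    fun _ => Nat.zero_le _) 1
  simp only [mem_filter, mem_univ, true_and] at ha hb
  have hv : ¬ G.IsLeaf v := fun h => a.2 (h.eq_of_isAncestor ha ▸ h)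
  have hbv := (hG.1 v b hv b.2).resolve_left hb
  exact Nat.sub_le_sub_right (hG.2 b a b.2 a.2 (hbv.trans ha)) 1

theorem IsGreedyCaterpillar.leafCount_le (hG : G.IsGreedyCaterpillar) (ψ : T.Internal ≃ G.Internal)
    (hψ : ∀ a, G.childCount (ψ a) = T.childCount a) {u : V} {v : W}
    (h : T.internalCount u ≤ G.internalCount v) : T.leafCount u ≤ G.leafCount v := by
  set s : Finset T.Internal := {a | T.IsAncestor u a.1}
  have hsum : ∑ a ∈ s, (T.childCount a - 1) = ∑ b ∈ s.map ψ.toEmbedding, (G.childCount b - 1) := by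
    simp [hψ]
  rw [leafCount_eq, hsum]
  exact hG.add_sum_le_leafCount (by rwa [card_map])

theorem IsCaterpillar.leafSum_le (hG : G.IsCaterpillar) {x : T.Leaf → ℝ} (hx : 0 ≤ x)
    (σ : T.Leaf ≃ G.Leaf) (hσ : ∀ l l', x l < x l' → G.level (σ l) ≤ G.level (σ l'))
    {u : V} {v : W} (hv : ¬ G.IsLeaf v) (h : T.leafCount u ≤ G.leafCount v) :
    T.leafSum x u ≤ G.leafSum (x ∘ σ.symm) v := by
  set K : Finset T.Leaf := {l | G.IsAncestor v (σ l).1}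
  have hK : G.leafSum (x ∘ σ.symm) v = ∑ l ∈ K, x l := by
    rw [leafSum]
    exact sum_equiv σ.symm (by simp [K]) (by simp)
  have hcard : #K = G.leafCount v := card_equiv σ (by simp [K])
  -- leaves below `v` lie deeper than all other leaves, so `K` carries the largest values of `x`
  refine hK ▸ sum_le_sum_of_card_le_of_forall_le (hcard ▸ h) (fun l hl l' hl' => ?_) hx
  simp only [K, mem_filter, mem_univ, true_and] at hl hl'
  by_contra! hlt
  have hlev := (hl.level_lt fun h => hv (h ▸ (σ l).2)).trans_le (hσ l l' hlt)
  exact hl' (hG.isAncestor_of_level_lt hv hlev)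

theorem exists_dotProduct_ancMatrix_mulVec_le (hG : G.IsGreedyCaterpillar)
    (hS : T.outdegSeq = G.outdegSeq) {x : T.Leaf → ℝ} (hx : 0 ≤ x) :
    ∃ y : G.Leaf → ℝ, y ⬝ᵥ y = x ⬝ᵥ x ∧
      x ⬝ᵥ T.ancMatrix *ᵥ x ≤ y ⬝ᵥ G.ancMatrix *ᵥ y := by
  obtain ⟨e, he⟩ := exists_equiv_childCount hS
  let ψ : T.Internal ≃ G.Internal :=
    e.subtypeEquiv fun v => not_congr (isLeaf_iff_of_childCount_eq (he v)).symm
  let eLeaf : T.Leaf ≃ G.Leaf := e.subtypeEquiv fun v => (isLeaf_iff_of_childCount_eq (he v)).symm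
  obtain ⟨σ, hσ⟩ := Fintype.exists_equiv_lt_imp_le (Fintype.card_congr eLeaf) x (G.level ·.1)
  obtain ⟨φ, hφ⟩ := hG.1.exists_equiv_internalCount_le (Fintype.card_congr ψ)
  have hsq : ∑ u, T.leafSum x u ^ 2 ≤ ∑ w, G.leafSum (x ∘ σ.symm) w ^ 2 := by
    rw [T.sum_sq_leafSum, G.sum_sq_leafSum, ← φ.sum_comp, ← σ.sum_comp]
    refine add_le_add (by simp) (sum_le_sum fun a _ => pow_le_pow_left₀ (T.leafSum_nonneg hx _)
      (hG.1.leafSum_le hx σ hσ (φ a).2 (hG.leafCount_le ψ (fun a => he a) (hφ a))) 2)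
  refine ⟨x ∘ σ.symm, ?_, ?_⟩
  · simp only [dotProduct, Function.comp_apply]
    exact σ.symm.sum_comp fun l => x l * x l
  · have hG' := G.dotProduct_ancMatrix_mulVec_add_sq (x ∘ σ.symm)
    rw [show ∑ l, (x ∘ σ.symm) l = ∑ l, x l from σ.symm.sum_comp x] at hG'
    linarith [T.dotProduct_ancMatrix_mulVec_add_sq x]

end TreeOn

/-- Among all rooted trees with a given outdegree sequence,
the greedy caterpillar has the maximum ancestral spectral radius. -/
theorem rhoC_le_rhoC_greedyCaterpillar
    {V W : Type} [Fintype V] [DecidableEq V] [Fintype W] [DecidableEq W]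
    (T : TreeOn V) (G : TreeOn W)
    (hG : G.IsGreedyCaterpillar) (hS : T.outdegSeq = G.outdegSeq) :
    T.rhoC ≤ G.rhoC := by
  refine Real.sSup_le (fun μ ⟨x, hx, hμ⟩ => ?_) G.rhoC_nonneg
  obtain ⟨y, hyy, hle⟩ := TreeOn.exists_dotProduct_ancMatrix_mulVec_le hG hS (abs_nonneg x)
  have hxx : 0 < x ⬝ᵥ x :=
    (Fintype.sum_nonneg fun i => mul_self_nonneg (x i)).lt_of_ne' (mt dotProduct_self_eq_zero.mp hx)
  refine le_of_mul_le_mul_right ?_ hxx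
  calc μ * (x ⬝ᵥ x) = x ⬝ᵥ T.ancMatrix *ᵥ x := by rw [hμ, dotProduct_smul, smul_eq_mul]
    _ ≤ |x| ⬝ᵥ T.ancMatrix *ᵥ |x| := Matrix.dotProduct_mulVec_le_abs T.ancMatrix_nonneg x
    _ ≤ y ⬝ᵥ G.ancMatrix *ᵥ y := hle
    _ ≤ G.rhoC * (y ⬝ᵥ y) := G.ancMatrix_isHermitian.dotProduct_mulVec_le_sSup_mul y
    _ = G.rhoC * (x ⬝ᵥ x) := by
      rw [hyy]
      simp [dotProduct, abs_mul_abs_self]
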